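/- For every reduced n-expression u, one has dist(u, NF(u)) ≤ n(n-1)·length(u)/2, where NF(u) is the unique normal expression equivalent to u. -/

import Mathlib

/-!
Induct on the length of `u`, keeping the prefix in normal form. When a letter `s_i` is appended
to a normal word `s_{1,f(1)} ⋯ s_{k,f(k)}`, it travels leftwards through the blocks: it commutes
past `s_{k,j}` if `i + 1 < j`, becomes `s_{i-1}` (by commutations and one braid relation) if
`j < i`, and is absorbed if `i + 1 = j`; the case `i = j` would make the word non-reduced.
Block `m` costs at most `m - 1` relations, so each letter costs at most `n.choose 2`. Normal
words are determined by their permutations, so the normal word reached is `NF(u)`.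
-/

open scoped Classical

noncomputable section

/-- adjacent transposition `s i = (i, i+1)` acting on ℕ (1-indexed positions) -/
def s (i : ℕ) : Equiv.Perm ℕ := Equiv.swap i (i + 1)

/-- permutation represented by a word; letters are applied left to right
(`wperm (u ++ v) = wperm v * wperm u`, i.e. `u` first, then `v`). -/
def wperm (w : List ℕ) : Equiv.Perm ℕ := ((w.map s).reverse).prod

/-- `w` is an `n`-expression: a word in the letters `s 1, ..., s (n-1)` -/
def IsExpr (n : ℕ) (w : List ℕ) : Prop := ∀ i ∈ w, 1 ≤ i ∧ i + 1 ≤ n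

/-- set of inversions of a permutation of `{1,...,n}` -/
def invSet (n : ℕ) (π : Equiv.Perm ℕ) : Finset (ℕ × ℕ) :=
  (Finset.Icc 1 n ×ˢ Finset.Icc 1 n).filter (fun pq => pq.1 < pq.2 ∧ π pq.2 < π pq.1)

/-- a reduced `n`-expression: its length equals the inversion number of the
permutation it represents -/
def ReducedExpr (n : ℕ) (w : List ℕ) : Prop :=
  IsExpr n w ∧ w.length = (invSet n (wperm w)).card

/-- one application of a braid relation `s i s j s i = s j s i s j`, `|i-j| = 1` -/
inductive StepI : List ℕ → List ℕ → Prop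
  | mk (a b : List ℕ) (i j : ℕ) (h : i + 1 = j ∨ j + 1 = i) :
      StepI (a ++ i :: j :: i :: b) (a ++ j :: i :: j :: b)

/-- one application of a commutation relation `s i s j = s j s i`, `|i-j| ≥ 2` -/
inductive StepII : List ℕ → List ℕ → Prop
  | mk (a b : List ℕ) (i j : ℕ) (h : i + 2 ≤ j ∨ j + 2 ≤ i) :
      StepII (a ++ i :: j :: b) (a ++ j :: i :: b)

def BraidStep (u v : List ℕ) : Prop := StepI u v ∨ StepII u v

/-- `c` is a derivation from `u` to `v` by braid relations -/
def IsDeriv (u v : List ℕ) (c : List (List ℕ)) : Prop :=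
  c.Chain' BraidStep ∧ c.head? = some u ∧ c.getLast? = some v

/-- combinatorial distance: minimal number of braid relations transforming `u` into `v` -/
def dist (u v : List ℕ) : ℕ :=
  sInf {k | ∃ c, IsDeriv u v c ∧ c.length = k + 1}

/-- the word `s_{j,i} = s_{j-1} s_{j-2} ... s_i` (empty if `j ≤ i`) -/
def sji (j i : ℕ) : List ℕ := (List.range (j - i)).map (fun k => j - 1 - k)

/-- the normal word `s_{1,f(1)} s_{2,f(2)} ... s_{n,f(n)}` -/
def normalWord (n : ℕ) (f : ℕ → ℕ) : List ℕ :=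
  ((List.range n).map (fun k => sji (k + 1) (f (k + 1)))).flatten

/-- `f : {1,...,n} → {1,...,n}` with `1 ≤ f i ≤ i` for all `i` -/
def IsNormalFun (n : ℕ) (f : ℕ → ℕ) : Prop := ∀ i ∈ Finset.Icc 1 n, 1 ≤ f i ∧ f i ≤ i

/-- names of the successive crossings: the name of a letter is the pair of starting
positions of the two strands crossing there -/
def namesAux : Equiv.Perm ℕ → List ℕ → List (Finset ℕ)
  | _, [] => []
  | π, i :: rest => ({π⁻¹ i, π⁻¹ (i + 1)} : Finset ℕ) :: namesAux (s i * π) rest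

/-- the name sequence `S(w)` of a word -/
def names (w : List ℕ) : List (Finset ℕ) := namesAux 1 w

/-- two entries occur in the same relative order in `S` and `S'` -/
def sameOrder (S S' : List (Finset ℕ)) (a b : Finset ℕ) : Prop :=
  (S.idxOf a < S.idxOf b) ↔ (S'.idxOf a < S'.idxOf b)

/-- `I₃(S,S')`: number of triples `{p,q,r} ⊆ {1,...,n}` such that the relative order of
the three pairs `{p,q}, {p,r}, {q,r}` is not the same in `S` and `S'` -/
def I3 (n : ℕ) (S S' : List (Finset ℕ)) : ℕ :=
  (((Finset.Icc 1 n).powersetCard 3).filter (fun t =>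
    ¬ ∀ a ∈ t.powersetCard 2, ∀ b ∈ t.powersetCard 2, sameOrder S S' a b)).card

/-- `I₂,₂(S,S')`: number of unordered pairs of disjoint pairs in `{1,...,n}` whose
relative order is not the same in `S` and `S'` -/
def I22 (n : ℕ) (S S' : List (Finset ℕ)) : ℕ :=
  ((((Finset.Icc 1 n).powersetCard 2).powersetCard 2).filter (fun P =>
    (∀ a ∈ P, ∀ b ∈ P, a ≠ b → Disjoint a b) ∧
    ¬ ∀ a ∈ P, ∀ b ∈ P, sameOrder S S' a b)).card

/-- total number of unordered pairs of entries whose relative order differs -/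
def InvCount (S S' : List (Finset ℕ)) : ℕ :=
  ((S.toFinset.powersetCard 2).filter (fun P =>
    ¬ ∀ a ∈ P, ∀ b ∈ P, sameOrder S S' a b)).card

/-- number of type I steps in a derivation -/
def countStepsI (c : List (List ℕ)) : ℕ :=
  ((Finset.range (c.length - 1)).filter (fun k => StepI (c.getD k []) (c.getD (k + 1) []))).card

/-- number of type II steps in a derivation -/
def countStepsII (c : List (List ℕ)) : ℕ :=
  ((Finset.range (c.length - 1)).filter (fun k => StepII (c.getD k []) (c.getD (k + 1) []))).card

/-- position of the strand starting at position `p` after the first `k` letters of `w` -/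
def strandPos (w : List ℕ) (p k : ℕ) : ℕ := wperm (w.take k) p

/-- number of unit squares to the right of the `n`-th strand in the braid diagram of `w`,
drawn on an `(n-1) × length w` grid -/
def area (n : ℕ) (w : List ℕ) : ℕ :=
  ((List.range w.length).map (fun k => n - max (strandPos w n k) (strandPos w n (k + 1)))).sum

/-- `u_n = s_{1,1} s_{2,1} ... s_{n,1}` -/
def uWord (n : ℕ) : List ℕ := ((List.range n).map (fun k => sji (k + 1) 1)).flatten

/-- `v_n = s_{n,1} s_{n,2} ... s_{n,n-1}` -/
def vWord (n : ℕ) : List ℕ := ((List.range (n - 1)).map (fun k => sji n (k + 1))).flatten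

lemma wperm_append (a b : List ℕ) : wperm (a ++ b) = wperm b * wperm a := by
  simp [wperm, List.prod_append]

lemma wperm_singleton (i : ℕ) : wperm [i] = s i := by
  simp [wperm]

lemma wperm_cons (i : ℕ) (w : List ℕ) : wperm (i :: w) = wperm w * s i := by
  rw [← List.singleton_append, wperm_append, wperm_singleton]

lemma s_apply (i x : ℕ) : s i x = if x = i then i + 1 else if x = i + 1 then i else x := by
  simp [s, Equiv.swap_apply_def]

lemma wperm_apply_of_forall_lt {x : ℕ} :
    ∀ {w : List ℕ}, (∀ m ∈ w, m + 1 < x) → wperm w x = x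
  | [], _ => rfl
  | m :: w, h => by
    have hm := h m List.mem_cons_self
    rw [wperm_cons, Equiv.Perm.mul_apply, s_apply, if_neg (by omega), if_neg (by omega)]
    exact wperm_apply_of_forall_lt fun y hy => h y (List.mem_cons_of_mem m hy)

lemma s_mul_s_succ_mul_s (i : ℕ) : s i * s (i + 1) * s i = s (i + 1) * s i * s (i + 1) := by
  have h1 := Equiv.swap_mul_swap_mul_swap (x := i) (y := i + 1) (z := i + 1 + 1)
    (by omega) (by omega)
  have h2 := Equiv.swap_mul_swap_mul_swap (x := i + 1 + 1) (y := i + 1) (z := i)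
    (by omega) (by omega)
  rw [Equiv.swap_comm (i + 1) i, Equiv.swap_comm (i + 1 + 1) (i + 1)] at h2
  rw [s, s, h1, h2, Equiv.swap_comm]

lemma wperm_braid {i j : ℕ} (h : i + 1 = j ∨ j + 1 = i) :
    wperm [i, j, i] = wperm [j, i, j] := by
  rcases h with rfl | rfl
  · simp [wperm, ← mul_assoc, s_mul_s_succ_mul_s]
  · simp [wperm, ← mul_assoc, s_mul_s_succ_mul_s]

lemma wperm_comm {i j : ℕ} (h : i + 2 ≤ j ∨ j + 2 ≤ i) : wperm [i, j] = wperm [j, i] := by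
  ext x
  simp only [wperm, List.map_cons, List.map_nil, List.reverse_cons, List.reverse_nil,
    List.nil_append, List.cons_append, List.prod_cons, List.prod_nil, mul_one,
    Equiv.Perm.mul_apply, s_apply]
  split_ifs <;> omega

lemma wperm_append_append_congr {x y : List ℕ} (a b : List ℕ) (h : wperm x = wperm y) :
    wperm (a ++ x ++ b) = wperm (a ++ y ++ b) := by
  simp only [wperm_append, h]

namespace BraidStep

lemma wperm_eq {u v : List ℕ} (h : BraidStep u v) : wperm u = wperm v := by
  rcases h with ⟨a, b, i, j, hij⟩ | ⟨a, b, i, j, hij⟩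
  · simpa using wperm_append_append_congr a b (wperm_braid hij)
  · simpa using wperm_append_append_congr a b (wperm_comm hij)

lemma length_eq {u v : List ℕ} (h : BraidStep u v) : u.length = v.length := by
  rcases h with ⟨a, b, i, j, -⟩ | ⟨a, b, i, j, -⟩ <;> simp

lemma append_append {u v : List ℕ} (a b : List ℕ) (h : BraidStep u v) :
    BraidStep (a ++ u ++ b) (a ++ v ++ b) := by
  rcases h with ⟨c, d, i, j, hij⟩ | ⟨c, d, i, j, hij⟩
  · have h := StepI.mk (a ++ c) (d ++ b) i j hij
    simp only [List.append_assoc, List.cons_append] at h ⊢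
    exact Or.inl h
  · have h := StepII.mk (a ++ c) (d ++ b) i j hij
    simp only [List.append_assoc, List.cons_append] at h ⊢
    exact Or.inr h

end BraidStep

inductive BraidReach : ℕ → List ℕ → List ℕ → Prop
  | refl (u : List ℕ) : BraidReach 0 u u
  | head {c : ℕ} {u v w : List ℕ} :
      BraidStep u v → BraidReach c v w → BraidReach (c + 1) u w

namespace BraidReach

lemma single {u v : List ℕ} (h : BraidStep u v) : BraidReach 1 u v :=
  head h (refl v)

lemma trans {c d : ℕ} {u v w : List ℕ} (h₁ : BraidReach c u v) (h₂ : BraidReach d v w) :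
    BraidReach (c + d) u w := by
  induction h₁ with
  | refl => simpa using h₂
  | head hs _ ih => rw [Nat.add_right_comm]; exact head hs (ih h₂)

lemma wperm_eq {c : ℕ} {u v : List ℕ} (h : BraidReach c u v) : wperm u = wperm v := by
  induction h with
  | refl => rfl
  | head hs _ ih => exact hs.wperm_eq.trans ih

lemma length_eq {c : ℕ} {u v : List ℕ} (h : BraidReach c u v) : u.length = v.length := by
  induction h with
  | refl => rfl
  | head hs _ ih => exact hs.length_eq.trans ih

lemma append_append {c : ℕ} {u v : List ℕ} (a b : List ℕ) (h : BraidReach c u v) :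
    BraidReach c (a ++ u ++ b) (a ++ v ++ b) := by
  induction h with
  | refl => exact refl _
  | head hs _ ih => exact head (hs.append_append a b) ih

lemma append_right {c : ℕ} {u v : List ℕ} (b : List ℕ) (h : BraidReach c u v) :
    BraidReach c (u ++ b) (v ++ b) := by
  simpa using h.append_append [] b

lemma append_left {c : ℕ} {u v : List ℕ} (a : List ℕ) (h : BraidReach c u v) :
    BraidReach c (a ++ u) (a ++ v) := by
  simpa using h.append_append a []

lemma exists_isDeriv {c : ℕ} {u v : List ℕ} (h : BraidReach c u v) :
    ∃ d, IsDeriv u v d ∧ d.length = c + 1 := by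
  induction h with
  | refl u => exact ⟨[u], ⟨List.isChain_singleton u, rfl, rfl⟩, rfl⟩
  | @head c u v w hs _ ih =>
    obtain ⟨d, ⟨hchain, hhead, hlast⟩, hlen⟩ := ih
    obtain ⟨x, d, rfl⟩ := List.exists_cons_of_length_eq_add_one hlen
    cases hhead
    exact ⟨u :: v :: d, ⟨hchain.cons (by simpa using hs), rfl, by simpa using hlast⟩,
      by simpa using hlen⟩

lemma dist_le {c : ℕ} {u v : List ℕ} (h : BraidReach c u v) : dist u v ≤ c :=
  Nat.sInf_le h.exists_isDeriv

end BraidReach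

lemma braidReach_append_singleton_of_far {i : ℕ} :
    ∀ {w : List ℕ}, (∀ m ∈ w, m + 2 ≤ i ∨ i + 2 ≤ m) →
      BraidReach w.length (w ++ [i]) (i :: w)
  | [], _ => BraidReach.refl _
  | m :: w, h => by
    have hm : BraidStep ([] ++ m :: i :: w) ([] ++ i :: m :: w) :=
      Or.inr (StepII.mk [] w m i (h m List.mem_cons_self))
    have hw := braidReach_append_singleton_of_far fun x hx => h x (List.mem_cons_of_mem m hx)
    simpa [Nat.add_comm] using (hw.append_left [m]).trans (BraidReach.single hm)

lemma sji_of_le {k j : ℕ} (h : k ≤ j) : sji k j = [] := by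
  simp [sji, Nat.sub_eq_zero_of_le h]

lemma sji_succ_self (j : ℕ) : sji (j + 1) j = [j] := by
  simp [sji]

lemma length_sji (k j : ℕ) : (sji k j).length = k - j := by
  simp [sji]

lemma mem_sji {k j m : ℕ} : m ∈ sji k j ↔ j ≤ m ∧ m < k := by
  simp only [sji, List.mem_map, List.mem_range]
  constructor
  · rintro ⟨t, ht, rfl⟩
    omega
  · rintro ⟨h₁, h₂⟩
    exact ⟨k - 1 - m, by omega, by omega⟩

lemma sji_append_sji {k i j : ℕ} (h₁ : j ≤ i) (h₂ : i ≤ k) :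
    sji k i ++ sji i j = sji k j := by
  have hsplit : k - j = (k - i) + (i - j) := by omega
  simp only [sji, hsplit, List.range_add, List.map_append, List.map_map]
  congr 1
  refine List.map_congr_left fun t ht => ?_
  simp only [List.mem_range] at ht
  simp only [Function.comp_apply]
  omega

lemma wperm_sji_apply {k j : ℕ} (h : j ≤ k) : wperm (sji k j) k = j := by
  induction k with
  | zero => rw [Nat.le_zero.mp h]; rfl
  | succ k ih =>
    rcases h.eq_or_lt with rfl | hlt
    · rw [sji_of_le le_rfl]; rfl
    · have hk : wperm [k] (k + 1) = k := by simp [wperm, s]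
      rw [← sji_append_sji (Nat.le_of_lt_succ hlt) k.le_succ, sji_succ_self, wperm_append,
        Equiv.Perm.mul_apply, hk, ih (Nat.le_of_lt_succ hlt)]

/-- Commute `s_{i+1}` past `s_{i,j}`, apply the braid relation to `s_{i+1} s_i s_{i+1}`, then
commute `s_i` past `s_{k,i+2}`. -/
lemma braidReach_sji_append_singleton {k j i : ℕ} (h₁ : j ≤ i) (h₂ : i + 2 ≤ k) :
    BraidReach (k - j - 1) (sji k j ++ [i + 1]) (i :: sji k j) := by
  have hsplit : sji k j = sji k (i + 2) ++ (i + 1) :: i :: sji i j := by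
    rw [← sji_append_sji (show j ≤ i + 2 by omega) h₂,
      ← sji_append_sji (show j ≤ i + 1 by omega) (show i + 1 ≤ i + 2 by omega),
      ← sji_append_sji h₁ (show i ≤ i + 1 by omega), sji_succ_self, sji_succ_self]
    simp
  set A := sji k (i + 2)
  set B := sji i j
  have hB : BraidReach B.length (A ++ (i + 1) :: i :: (B ++ [i + 1]))
      (A ++ (i + 1) :: i :: (i + 1) :: B) := by
    simpa using (braidReach_append_singleton_of_far fun m hm => by
      have := mem_sji.mp hm; omega).append_left (A ++ [i + 1, i])
  have hbraid : BraidStep (A ++ (i + 1) :: i :: (i + 1) :: B) (A ++ i :: (i + 1) :: i :: B) :=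
    Or.inl (StepI.mk A B (i + 1) i (Or.inr rfl))
  have hA : BraidReach A.length (A ++ i :: (i + 1) :: i :: B) (i :: (A ++ (i + 1) :: i :: B)) := by
    simpa using (braidReach_append_singleton_of_far fun m hm => by
      have := mem_sji.mp hm; omega).append_right ((i + 1) :: i :: B)
  have hcost : B.length + 1 + A.length = k - j - 1 := by
    simp only [A, B, length_sji]
    omega
  rw [hsplit, ← hcost]
  simpa using (hB.trans (BraidReach.single hbraid)).trans hA

lemma exists_braidReach_sji_append_singleton {k j i : ℕ} (hj : 1 ≤ j) (hjk : j ≤ k + 1)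
    (hi : 1 ≤ i) (hik : i ≤ k) (habsorb : i + 1 ≠ j) (hcancel : i ≠ j) :
    ∃ i' c, 1 ≤ i' ∧ i' < k ∧ c ≤ k ∧
      BraidReach c (sji (k + 1) j ++ [i]) (i' :: sji (k + 1) j) := by
  rcases lt_or_gt_of_ne hcancel with hlt | hgt
  · refine ⟨i, _, hi, by omega, ?_, braidReach_append_singleton_of_far fun m hm => ?_⟩
    · rw [length_sji]; omega
    · have := mem_sji.mp hm; omega
  · obtain ⟨i', rfl⟩ : ∃ i', i = i' + 1 := ⟨i - 1, by omega⟩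
    exact ⟨i', _, by omega, by omega, by omega,
      braidReach_sji_append_singleton (by omega) (by omega)⟩

def IsReducedWord (n : ℕ) (w : List ℕ) : Prop := w.length = (invSet n (wperm w)).card

lemma invSet_one (n : ℕ) : invSet n 1 = ∅ := by
  simp only [invSet, Equiv.Perm.one_apply]
  exact Finset.filter_false_of_mem fun pq _ h => by omega

lemma invSet_s_mul_sdiff_subset (n i : ℕ) (π : Equiv.Perm ℕ) :
    invSet n (s i * π) \ invSet n π ⊆ {(π⁻¹ i, π⁻¹ (i + 1))} := by
  intro pq hpq
  simp only [Finset.mem_sdiff, invSet, Finset.mem_filter, Equiv.Perm.mul_apply, s_apply] at hpq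
  obtain ⟨⟨hmem, hlt, hinv⟩, hnot⟩ := hpq
  have hle : π pq.1 < π pq.2 :=
    (not_lt.mp fun h => hnot ⟨hmem, hlt, h⟩).lt_of_ne (π.injective.ne hlt.ne)
  have h₁ : π pq.1 = i ∧ π pq.2 = i + 1 := by
    split_ifs at hinv <;> omega
  rw [Finset.mem_singleton, ← h₁.2, ← h₁.1]
  simp

lemma card_invSet_s_mul_le (n i : ℕ) (π : Equiv.Perm ℕ) :
    (invSet n (s i * π)).card ≤ (invSet n π).card + 1 :=
  Finset.card_le_card_sdiff_add_card.trans <| by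
    rw [add_comm]
    gcongr
    exact (Finset.card_le_card (invSet_s_mul_sdiff_subset n i π)).trans_eq
      (Finset.card_singleton _)

lemma card_invSet_wperm_append_le (n : ℕ) (a : List ℕ) :
    ∀ b : List ℕ,
      (invSet n (wperm (a ++ b))).card ≤ (invSet n (wperm a)).card + b.length := by
  intro b
  induction b using List.reverseRecOn with
  | nil => simp
  | append_singleton b i ih =>
    have := card_invSet_s_mul_le n i (wperm (a ++ b))
    rw [← List.append_assoc, wperm_append, wperm_singleton, List.length_append,
      List.length_singleton]
    omega

lemma card_invSet_wperm_le_length (n : ℕ) (w : List ℕ) :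
    (invSet n (wperm w)).card ≤ w.length := by
  simpa [wperm, invSet_one] using card_invSet_wperm_append_le n [] w

namespace IsReducedWord

lemma of_append {n : ℕ} {a b : List ℕ} (h : IsReducedWord n (a ++ b)) : IsReducedWord n a := by
  have h₁ := card_invSet_wperm_append_le n a b
  have h₂ := card_invSet_wperm_le_length n a
  unfold IsReducedWord at h ⊢
  rw [List.length_append] at h
  omega

lemma of_braidReach {n c : ℕ} {u v : List ℕ} (huv : BraidReach c u v) (h : IsReducedWord n u) :
    IsReducedWord n v := by
  rwa [IsReducedWord, ← huv.length_eq, ← huv.wperm_eq]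

lemma not_append_pair (n : ℕ) (a : List ℕ) (i : ℕ) : ¬ IsReducedWord n (a ++ [i, i]) := by
  have hcancel : wperm (a ++ [i, i]) = wperm a := by
    rw [wperm_append, show wperm [i, i] = 1 by simp [wperm, s], one_mul]
  have := card_invSet_wperm_le_length n a
  rw [IsReducedWord, hcancel, List.length_append]
  simp only [List.length_cons, List.length_nil]
  omega

end IsReducedWord

lemma normalWord_succ (k : ℕ) (f : ℕ → ℕ) :
    normalWord (k + 1) f = normalWord k f ++ sji (k + 1) (f (k + 1)) := by
  simp [normalWord, List.range_succ]

lemma normalWord_congr {k : ℕ} {f g : ℕ → ℕ} (h : ∀ m ∈ Finset.Icc 1 k, f m = g m) :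
    normalWord k f = normalWord k g := by
  unfold normalWord
  congr 1
  refine List.map_congr_left fun t ht => ?_
  rw [h (t + 1) (by simpa using ht)]

lemma normalWord_succ_update (k j : ℕ) (f : ℕ → ℕ) :
    normalWord (k + 1) (Function.update f (k + 1) j) = normalWord k f ++ sji (k + 1) j := by
  rw [normalWord_succ, Function.update_self,
    normalWord_congr fun m hm => Function.update_of_ne (by simp at hm; omega) _ _]

lemma normalWord_id (k : ℕ) : normalWord k id = [] := by
  simp [normalWord, sji_of_le]

lemma lt_of_mem_normalWord {k m : ℕ} {f : ℕ → ℕ} (h : m ∈ normalWord k f) : m < k := by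
  simp only [normalWord, List.mem_flatten, List.mem_map, List.mem_range] at h
  obtain ⟨_, ⟨t, ht, rfl⟩, hm⟩ := h
  have := mem_sji.mp hm
  omega

lemma IsNormalFun.of_succ {k : ℕ} {f : ℕ → ℕ} (hf : IsNormalFun (k + 1) f) :
    IsNormalFun k f :=
  fun m hm => hf m (Finset.Icc_subset_Icc_right k.le_succ hm)

lemma IsNormalFun.update {k j : ℕ} {f : ℕ → ℕ} (hf : IsNormalFun k f) (hj : 1 ≤ j)
    (hjk : j ≤ k + 1) : IsNormalFun (k + 1) (Function.update f (k + 1) j) := by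
  intro m hm
  rcases eq_or_ne m (k + 1) with rfl | hne
  · simpa using ⟨hj, hjk⟩
  · rw [Function.update_of_ne hne]
    exact hf m (by simp at hm ⊢; omega)

lemma wperm_normalWord_succ_apply {k : ℕ} {f : ℕ → ℕ} (hf : IsNormalFun (k + 1) f) :
    wperm (normalWord (k + 1) f) (k + 1) = f (k + 1) := by
  rw [normalWord_succ, wperm_append, Equiv.Perm.mul_apply,
    wperm_apply_of_forall_lt (w := normalWord k f) fun m hm => by
      have := lt_of_mem_normalWord hm; omega,
    wperm_sji_apply (hf (k + 1) (by simp)).2]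

/-- The last block `s_{k+1,f(k+1)}` is read off from the image of `k + 1`, which the earlier
blocks fix. -/
lemma normalWord_eq_of_wperm_eq {k : ℕ} {f g : ℕ → ℕ} (hf : IsNormalFun k f)
    (hg : IsNormalFun k g) (h : wperm (normalWord k f) = wperm (normalWord k g)) :
    normalWord k f = normalWord k g := by
  induction k with
  | zero => rfl
  | succ k ih =>
    have hlast : f (k + 1) = g (k + 1) := by
      rw [← wperm_normalWord_succ_apply hf, ← wperm_normalWord_succ_apply hg, h]
    rw [normalWord_succ, normalWord_succ, wperm_append, wperm_append, hlast] at h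
    rw [normalWord_succ, normalWord_succ, ih hf.of_succ hg.of_succ (mul_left_cancel h), hlast]

theorem exists_braidReach_normalWord_append_singleton {n : ℕ} :
    ∀ {k : ℕ} {f : ℕ → ℕ} {i : ℕ}, IsNormalFun k f → 1 ≤ i → i < k →
      IsReducedWord n (normalWord k f ++ [i]) →
      ∃ g c, IsNormalFun k g ∧ BraidReach c (normalWord k f ++ [i]) (normalWord k g) ∧
        c ≤ k.choose 2
  | 0, _, _, _, _, hik, _ => absurd hik (Nat.not_lt_zero _)
  | k + 1, f, i, hf, hi, hik, hred => by
    obtain ⟨hj, hjk⟩ := hf (k + 1) (by simp)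
    set j := f (k + 1)
    have hword : normalWord (k + 1) f = normalWord k f ++ sji (k + 1) j := normalWord_succ k f
    by_cases habsorb : i + 1 = j
    · refine ⟨Function.update f (k + 1) i, 0, hf.of_succ.update hi hik.le, ?_, Nat.zero_le _⟩
      rw [normalWord_succ_update, hword, ← habsorb, ← sji_append_sji (Nat.le_succ i) hik,
        sji_succ_self, List.append_assoc]
      exact BraidReach.refl _
    by_cases hcancel : i = j
    · refine absurd hred ?_
      rw [hword, ← sji_append_sji (Nat.le_succ j) (by omega), sji_succ_self, ← hcancel]
      simpa using IsReducedWord.not_append_pair n (normalWord k f ++ sji (k + 1) (i + 1)) i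
    obtain ⟨i', c₁, hi', hi'k, hc₁, hpass⟩ :=
      exists_braidReach_sji_append_singleton hj hjk hi (by omega) habsorb hcancel
    have r₁ : BraidReach c₁ (normalWord (k + 1) f ++ [i])
        (normalWord k f ++ [i'] ++ sji (k + 1) j) := by
      simpa [hword] using hpass.append_left (normalWord k f)
    obtain ⟨g, c₀, hg, r₀, hc₀⟩ :=
      exists_braidReach_normalWord_append_singleton hf.of_succ hi' hi'k
        (hred.of_braidReach r₁).of_append
    refine ⟨Function.update g (k + 1) j, c₁ + c₀, hg.update hj hjk, ?_, ?_⟩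
    · rw [normalWord_succ_update]
      exact r₁.trans (r₀.append_right _)
    · have hchoose : (k + 1).choose 2 = k + k.choose 2 := by
        rw [Nat.choose_succ_succ', Nat.choose_one_right]
      omega

theorem exists_braidReach_normalWord {n : ℕ} :
    ∀ {u : List ℕ}, IsExpr n u → IsReducedWord n u →
      ∃ g c, IsNormalFun n g ∧ BraidReach c u (normalWord n g) ∧
        c ≤ n.choose 2 * u.length := by
  intro u
  induction u using List.reverseRecOn with
  | nil =>
    exact fun _ _ => ⟨id, 0, fun m hm => by simpa using (Finset.mem_Icc.mp hm).1, by
      rw [normalWord_id]; exact BraidReach.refl _, Nat.zero_le _⟩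
  | append_singleton u i ih =>
    intro hexpr hred
    obtain ⟨hi, hin⟩ := hexpr i (by simp)
    obtain ⟨g₀, c₀, hg₀, r₀, hc₀⟩ :=
      ih (fun m hm => hexpr m (by simp [hm])) hred.of_append
    have r₀' := r₀.append_right [i]
    obtain ⟨g, c₁, hg, r₁, hc₁⟩ :=
      exists_braidReach_normalWord_append_singleton hg₀ hi hin (hred.of_braidReach r₀')
    refine ⟨g, c₀ + c₁, hg, r₀'.trans r₁, ?_⟩
    rw [List.length_append, List.length_singleton, mul_add, mul_one]
    omega

/-- For every reduced `n`-expression `u`, the distance to its normal form `NF(u)`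
satisfies `dist(u, NF(u)) ≤ n(n-1)·length(u)/2`. -/
theorem dist_to_normal_form (n : ℕ) (u : List ℕ) (hu : ReducedExpr n u)
    (f : ℕ → ℕ) (hf : IsNormalFun n f)
    (heq : wperm (normalWord n f) = wperm u) :
    2 * dist u (normalWord n f) ≤ n * (n - 1) * u.length := by
  obtain ⟨g, c, hg, hreach, hc⟩ := exists_braidReach_normalWord hu.1 hu.2
  have hnf : normalWord n f = normalWord n g :=
    normalWord_eq_of_wperm_eq hf hg (heq.trans hreach.wperm_eq)
  calc 2 * dist u (normalWord n f) ≤ 2 * (n.choose 2 * u.length) := by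
        rw [hnf]
        exact Nat.mul_le_mul_left 2 (hreach.dist_le.trans hc)
    _ = n * (n - 1) * u.length := by
        rw [← mul_assoc, Nat.choose_two_right,
          Nat.mul_div_cancel' (Nat.even_mul_pred_self n).two_dvd]

end
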